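/- For every r ∈ ℕ with r·k₁ ≤ t₁ and all x, y ∈ ℂ, x^r · (∂^r/∂x^r) 𝓕₂⁽¹⁾(a,b₁,b₂;c₁,c₂;t₁,t₂,k₁,k₂,x,y) = ((−1)^{r k₁} (a)_r (b₁)_r (−t₁)_{r k₁} x^r / (c₁)_r) · 𝓕₂⁽¹⁾(a + r, b₁ + r, b₂; c₁ + r, c₂; t₁ − r k₁, t₂, k₁, k₂, x, y). (This is the paper's formula θ^r 𝓕₂⁽¹⁾ = …, with the iterated operator realized as x^r (∂/∂x)^r; the derivative is the r-th partial derivative in x of the polynomial function x ↦ 𝓕₂⁽¹⁾(…,x,y).) -/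

import Mathlib

/-
As a polynomial in `x`, `𝓕₂⁽¹⁾ = ∑ₘ Cₘ xᵐ`, and `xʳ ∂ʳ` multiplies `xᵐ` by the falling factorial
`m (m-1) ⋯ (m-r+1)`, which kills the terms with `m < r`. Writing `m = r + j`, the splitting
`(z)_{r+j} = (z)_r (z+r)_j` pulls the prefactor out of every coefficient, and
`(-t₁)_{(r+j)k₁} = (-t₁)_{rk₁} (-(t₁-rk₁))_{jk₁}` shifts `t₁` to `t₁ - rk₁`. Because `k₁ ≥ 1`, the
factor `(-t₁)_{mk₁}` vanishes beyond `m = r + (t₁ - rk₁)`, exactly where the shifted sum stops.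
-/

open Complex Finset

/-- Ascending Pochhammer symbol `(z)_j = z (z+1) ⋯ (z+j−1)`, with `(z)_0 = 1`. -/
noncomputable def poch (z : ℂ) (j : ℕ) : ℂ := (ascPochhammer ℂ j).eval z

/-- The first discrete Appell function `𝓕₂⁽¹⁾(a,b₁,b₂;c₁,c₂;t₁,t₂,k₁,k₂,x,y)`.
Since `(−t₁)_{m k₁} = 0` once `m k₁ > t₁` and `(−t₂)_{n k₂} = 0` once `n k₂ > t₂`
(for `k₁, k₂ ≥ 1`), the doubly infinite sum reduces to this finite sum. -/
noncomputable def F2one (a b₁ b₂ c₁ c₂ : ℂ) (t₁ t₂ k₁ k₂ : ℕ) (x y : ℂ) : ℂ :=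
  ∑ m ∈ Finset.range (t₁ + 1), ∑ n ∈ Finset.range (t₂ + 1),
    poch a (m + n) * poch b₁ m * poch b₂ n * (-1 : ℂ) ^ (m * k₁) * poch (-(t₁ : ℂ)) (m * k₁)
      * (-1 : ℂ) ^ (n * k₂) * poch (-(t₂ : ℂ)) (n * k₂) * x ^ m * y ^ n
    / (poch c₁ m * poch c₂ n * (Nat.factorial m : ℂ) * (Nat.factorial n : ℂ))

theorem Polynomial.iteratedDeriv_eval {𝕜 : Type*} [NontriviallyNormedField 𝕜] (p : Polynomial 𝕜)
    (r : ℕ) (x : 𝕜) :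
    iteratedDeriv r (fun z => p.eval z) x = (Polynomial.derivative^[r] p).eval x := by
  induction r generalizing p with
  | zero => rfl
  | succ r ih =>
    rw [iteratedDeriv_succ', Function.iterate_succ_apply, ← ih]
    congr 1 with z
    exact Polynomial.deriv p

theorem pow_mul_iteratedDeriv_sum_mul_pow {𝕜 : Type*} [NontriviallyNormedField 𝕜] (s : Finset ℕ)
    (g : ℕ → 𝕜) (r : ℕ) (x : 𝕜) :
    x ^ r * iteratedDeriv r (fun z => ∑ m ∈ s, g m * z ^ m) x
      = ∑ m ∈ s, m.descFactorial r * g m * x ^ m := by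
  have hpoly : (fun z => ∑ m ∈ s, g m * z ^ m)
      = fun z => (∑ m ∈ s, Polynomial.C (g m) * Polynomial.X ^ m).eval z := by
    simp [Polynomial.eval_finsetSum]
  rw [hpoly, Polynomial.iteratedDeriv_eval, Polynomial.iterate_derivative_sum,
    Polynomial.eval_finsetSum, Finset.mul_sum]
  refine Finset.sum_congr rfl fun m _ => ?_
  rw [Polynomial.iterate_derivative_C_mul, Polynomial.iterate_derivative_X_pow_eq_natCast_mul]
  rcases lt_or_ge m r with hmr | hrm
  · simp [Nat.descFactorial_eq_zero_iff_lt.mpr hmr]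
  · simp only [Polynomial.eval_mul, Polynomial.eval_C, Polynomial.eval_natCast,
      Polynomial.eval_pow, Polynomial.eval_X]
    rw [← pow_sub_mul_pow x hrm]
    ring

theorem poch_add (z : ℂ) (m n : ℕ) : poch z (m + n) = poch z m * poch (z + m) n := by
  simp [poch, ← ascPochhammer_mul, Polynomial.eval_comp]

noncomputable def F2oneTerm (a b₁ b₂ c₁ c₂ : ℂ) (t₁ t₂ k₁ k₂ m n : ℕ) : ℂ :=
  poch a (m + n) * poch b₁ m * poch b₂ n * (-1 : ℂ) ^ (m * k₁) * poch (-(t₁ : ℂ)) (m * k₁)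
    * (-1 : ℂ) ^ (n * k₂) * poch (-(t₂ : ℂ)) (n * k₂)
    / (poch c₁ m * poch c₂ n * (m.factorial : ℂ) * (n.factorial : ℂ))

noncomputable def F2oneCoeff (a b₁ b₂ c₁ c₂ : ℂ) (t₁ t₂ k₁ k₂ : ℕ) (y : ℂ) (m : ℕ) : ℂ :=
  ∑ n ∈ range (t₂ + 1), F2oneTerm a b₁ b₂ c₁ c₂ t₁ t₂ k₁ k₂ m n * y ^ n

section F2one

variable {a b₁ b₂ c₁ c₂ : ℂ} {t₁ t₂ k₁ k₂ : ℕ}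

theorem F2one_eq_sum_coeff_mul_pow (x y : ℂ) :
    F2one a b₁ b₂ c₁ c₂ t₁ t₂ k₁ k₂ x y
      = ∑ m ∈ range (t₁ + 1), F2oneCoeff a b₁ b₂ c₁ c₂ t₁ t₂ k₁ k₂ y m * x ^ m := by
  refine Finset.sum_congr rfl fun m _ => ?_
  rw [F2oneCoeff, Finset.sum_mul]
  refine Finset.sum_congr rfl fun n _ => ?_
  rw [F2oneTerm]
  ring

theorem F2oneTerm_eq_zero_of_lt {m : ℕ} (hm : t₁ < m * k₁) (n : ℕ) :
    F2oneTerm a b₁ b₂ c₁ c₂ t₁ t₂ k₁ k₂ m n = 0 := by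
  simp [F2oneTerm, poch, ascPochhammer_eval_neg_coe_nat_of_lt hm]

theorem descFactorial_mul_F2oneTerm_add {r : ℕ} (hr : r * k₁ ≤ t₁) (j n : ℕ) :
    (r + j).descFactorial r * F2oneTerm a b₁ b₂ c₁ c₂ t₁ t₂ k₁ k₂ (r + j) n
      = (-1 : ℂ) ^ (r * k₁) * poch a r * poch b₁ r * poch (-(t₁ : ℂ)) (r * k₁) / poch c₁ r
        * F2oneTerm (a + r) (b₁ + r) b₂ (c₁ + r) c₂ (t₁ - r * k₁) t₂ k₁ k₂ j n := by
  have hfact : (j.factorial : ℂ)⁻¹ = (r + j).descFactorial r * ((r + j).factorial : ℂ)⁻¹ := by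
    have hdesc : ((r + j).descFactorial r : ℂ) ≠ 0 := by
      simp [Nat.descFactorial_eq_zero_iff_lt]
    have := Nat.factorial_mul_descFactorial (Nat.le_add_right r j)
    rw [Nat.add_sub_cancel_left] at this
    rw [← this, Nat.cast_mul, mul_inv, mul_left_comm, mul_inv_cancel₀ hdesc, mul_one]
  have ht : -(t₁ : ℂ) + (r * k₁ : ℕ) = -((t₁ - r * k₁ : ℕ) : ℂ) := by
    push_cast [Nat.cast_sub hr]; ring
  simp only [F2oneTerm, add_mul, pow_add, add_assoc, poch_add, ht, div_eq_mul_inv, mul_inv, hfact]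
  ring

theorem F2oneCoeff_eq_zero_of_lt {y : ℂ} {m : ℕ} (hm : t₁ < m * k₁) :
    F2oneCoeff a b₁ b₂ c₁ c₂ t₁ t₂ k₁ k₂ y m = 0 :=
  Finset.sum_eq_zero fun n _ => by rw [F2oneTerm_eq_zero_of_lt hm, zero_mul]

theorem descFactorial_mul_F2oneCoeff_add {r : ℕ} (hr : r * k₁ ≤ t₁) (y : ℂ) (j : ℕ) :
    (r + j).descFactorial r * F2oneCoeff a b₁ b₂ c₁ c₂ t₁ t₂ k₁ k₂ y (r + j)
      = (-1 : ℂ) ^ (r * k₁) * poch a r * poch b₁ r * poch (-(t₁ : ℂ)) (r * k₁) / poch c₁ r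
        * F2oneCoeff (a + r) (b₁ + r) b₂ (c₁ + r) c₂ (t₁ - r * k₁) t₂ k₁ k₂ y j := by
  simp only [F2oneCoeff, Finset.mul_sum, ← mul_assoc, descFactorial_mul_F2oneTerm_add hr]

end F2one

theorem theta_pow_formula_general (a b₁ b₂ c₁ c₂ : ℂ) (k₁ k₂ : ℕ)
    (hk₁ : 0 < k₁)
    (t₁ t₂ : ℕ) (r : ℕ) (hr : r * k₁ ≤ t₁) (x y : ℂ) :
    x ^ r * iteratedDeriv r (fun s : ℂ => F2one a b₁ b₂ c₁ c₂ t₁ t₂ k₁ k₂ s y) x =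
      (-1 : ℂ) ^ (r * k₁) * poch a r * poch b₁ r * poch (-(t₁ : ℂ)) (r * k₁) * x ^ r /
          poch c₁ r *
        F2one (a + r) (b₁ + r) b₂ (c₁ + r) c₂ (t₁ - r * k₁) t₂ k₁ k₂ x y := by
  have hvanish : ∀ m ≥ r + (t₁ - r * k₁ + 1),
      (m.descFactorial r : ℂ) * F2oneCoeff a b₁ b₂ c₁ c₂ t₁ t₂ k₁ k₂ y m * x ^ m = 0 := by
    intro m hm
    obtain ⟨i, rfl⟩ : ∃ i, m = r + i := ⟨m - r, by omega⟩
    have hi : i ≤ i * k₁ := Nat.le_mul_of_pos_right i hk₁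
    rw [F2oneCoeff_eq_zero_of_lt (by rw [add_mul]; omega), mul_zero, zero_mul]
  have hlen : r + (t₁ - r * k₁ + 1) ≤ t₁ + 1 := by
    have := Nat.le_mul_of_pos_right r hk₁
    omega
  have hlow : ∀ m ∈ range r,
      (m.descFactorial r : ℂ) * F2oneCoeff a b₁ b₂ c₁ c₂ t₁ t₂ k₁ k₂ y m * x ^ m = 0 := by
    intro m hm
    rw [Nat.descFactorial_eq_zero_iff_lt.mpr (mem_range.mp hm), Nat.cast_zero, zero_mul, zero_mul]
  simp only [F2one_eq_sum_coeff_mul_pow, pow_mul_iteratedDeriv_sum_mul_pow]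
  rw [Finset.eventually_constant_sum hvanish hlen, Finset.sum_range_add, Finset.sum_eq_zero hlow,
    zero_add, Finset.mul_sum]
  refine Finset.sum_congr rfl fun j _ => ?_
  rw [descFactorial_mul_F2oneCoeff_add hr]
  ring

/-- The differential formula `θ^r 𝓕₂⁽¹⁾ = (−1)^{rk₁}(a)_r(b₁)_r(−t₁)_{rk₁} x^r / (c₁)_r ·
𝓕₂⁽¹⁾(a+r, b₁+r, b₂; c₁+r, c₂; t₁−rk₁, t₂, k₁, k₂, x, y)`, with the iterated operator
realized as `x^r (∂/∂x)^r`. -/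
theorem theta_pow_formula (a b₁ b₂ c₁ c₂ : ℂ) (k₁ k₂ : ℕ)
    (hk₁ : 0 < k₁) (hk₂ : 0 < k₂)
    (hc₁ : ∀ n : ℕ, c₁ ≠ -(n : ℂ)) (hc₂ : ∀ n : ℕ, c₂ ≠ -(n : ℂ))
    (t₁ t₂ : ℕ) (r : ℕ) (hr : r * k₁ ≤ t₁) (x y : ℂ) :
    x ^ r * iteratedDeriv r (fun s : ℂ => F2one a b₁ b₂ c₁ c₂ t₁ t₂ k₁ k₂ s y) x =
      (-1 : ℂ) ^ (r * k₁) * poch a r * poch b₁ r * poch (-(t₁ : ℂ)) (r * k₁) * x ^ r /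
          poch c₁ r *
        F2one (a + r) (b₁ + r) b₂ (c₁ + r) c₂ (t₁ - r * k₁) t₂ k₁ k₂ x y :=
  theta_pow_formula_general a b₁ b₂ c₁ c₂ k₁ k₂ hk₁ t₁ t₂ r hr x y
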